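/- Let F separate points of R^D. Then S_ħ(R,δ) ≅ S_ħ(R̃,δ̃) if and only if there exist U ∈ GL_D(Z) and n ∈ Z^D such that R̃ = UR and δ̃ = δ + R^{-1}n. -/

import Mathlib

open scoped BigOperators

noncomputable section

abbrev V (D : ℕ) := Fin D → ℝ
abbrev L (D : ℕ) := Fin D → ℤ

def cz {D : ℕ} (n : L D) : V D := fun i => (n i : ℝ)

def Nr (D : ℕ) (x y : Fin D → ℝ) : ℝ :=
  ∑ m : Fin D, ∑ n : Fin D, if (n : ℕ) < (m : ℕ) then x m * y n else 0

def Nz (D : ℕ) (k l : L D) : ℤ :=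
  ∑ m : Fin D, ∑ n : Fin D, if (n : ℕ) < (m : ℕ) then k m * l n else 0

def Sh (D : ℕ) (hb : ℝ) (k : L D) (f : V D → ℂ) : V D → ℂ :=
  fun u => f (fun i => u i + hb * (k i : ℝ))

abbrev Alg (D : ℕ) := (L D) →₀ ((V D) → ℂ)

def amul (D : ℕ) (hb : ℝ) (q : ℂ) (a b : Alg D) : Alg D :=
  a.sum fun k f => b.sum fun l g =>
    Finsupp.single (k + l) ((q ^ (Nz D k l)) • (f * Sh D hb k g))

def astar (D : ℕ) (hb : ℝ) (q : ℂ) (a : Alg D) : Alg D :=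
  a.sum fun k f => Finsupp.single (-k) ((q ^ (Nz D (-k) (-k))) • Sh D hb (-k) (star f))

structure GoodF (D : ℕ) (hb : ℝ) (F : Set (V D → ℂ)) : Prop where
  zero_mem : (0 : V D → ℂ) ∈ F
  add_mem : ∀ f ∈ F, ∀ g ∈ F, f + g ∈ F
  mul_mem : ∀ f ∈ F, ∀ g ∈ F, f * g ∈ F
  smul_mem : ∀ (c : ℂ), ∀ f ∈ F, c • f ∈ F
  star_mem : ∀ f ∈ F, star f ∈ F
  shift_mem : ∀ (k : L D), ∀ f ∈ F, Sh D hb k f ∈ F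

def SeparatesPts (D : ℕ) (F : Set (V D → ℂ)) : Prop :=
  ∀ x y : V D, x ≠ y → ∃ f ∈ F, f x ≠ f y


abbrev DMod (D : ℕ) := (L D) →₀ ℂ

def Rinv {D : ℕ} (R : Matrix (Fin D) (Fin D) ℤ) : Matrix (Fin D) (Fin D) ℝ :=
  (R.map (Int.cast : ℤ → ℝ))⁻¹

def dact (D : ℕ) (hb : ℝ) (q : ℂ) (R : Matrix (Fin D) (Fin D) ℤ) (δ : V D)
    (a : Alg D) (v : DMod D) : DMod D :=
  a.sum fun n f => v.sum fun k c =>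
    Finsupp.single (k - R.mulVec n)
      ((q ^ (((Nr D ((Rinv R).mulVec (cz k) - cz n + δ) (cz n) : ℝ) : ℂ))) *
        f (hb • ((Rinv R).mulVec (cz k) - cz n + δ)) * c)

def DIso (D : ℕ) (hb : ℝ) (q : ℂ) (F : Set (V D → ℂ))
    (R : Matrix (Fin D) (Fin D) ℤ) (δ : V D)
    (R' : Matrix (Fin D) (Fin D) ℤ) (δ' : V D) : Prop :=
  ∃ φ : DMod D ≃ₗ[ℂ] DMod D,
    ∀ a : Alg D, (∀ k, a k ∈ F) → ∀ v : DMod D,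
      φ (dact D hb q R δ a v) = dact D hb q R' δ' a (φ v)

/-!
The functions of `F`, placed at `U⁰`, act diagonally on `S_ħ(R,δ)`: the basis vector `|k⟩` is
multiplied by `f (ħ (R⁻¹k + δ))`. An isomorphism therefore carries the point `R⁻¹k + δ` of this
joint spectrum to a point `R̃⁻¹l + δ̃` of the other one, as `F` separates points. Hence the lattice
cosets `R⁻¹ℤ^D + δ` and `R̃⁻¹ℤ^D + δ̃` coincide, which forces `R̃R⁻¹` and `RR̃⁻¹` to be integer
matrices and `δ̃ - δ ∈ R⁻¹ℤ^D`. Conversely, for `R̃ = UR`, `δ̃ = δ + R⁻¹n`, the relabelling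
`k ↦ U(k - n)` of the basis is an isomorphism.
-/

open Matrix

section Lattice

variable {D : ℕ}

lemma cz_zero : cz (0 : L D) = 0 := by
  ext; simp [cz]

lemma cz_sub (a b : L D) : cz (a - b) = cz a - cz b := by
  ext; simp [cz]

lemma cz_single (j : Fin D) : cz (Pi.single j 1 : L D) = Pi.single j 1 := by
  ext i
  by_cases h : i = j <;> simp [cz, h]

lemma cz_mulVec (M : Matrix (Fin D) (Fin D) ℤ) (x : L D) :
    cz (M *ᵥ x) = M.map Int.cast *ᵥ cz x := by
  ext i; simp [cz, mulVec, dotProduct]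

lemma map_intCast_mul (A B : Matrix (Fin D) (Fin D) ℤ) :
    (A * B).map (Int.cast : ℤ → ℝ) = A.map Int.cast * B.map Int.cast := by
  simpa using Matrix.map_mul (L := A) (M := B) (f := Int.castRingHom ℝ)

lemma isUnit_det_map_intCast {R : Matrix (Fin D) (Fin D) ℤ} (hR : R.det ≠ 0) :
    IsUnit (R.map (Int.cast : ℤ → ℝ)).det := by
  rw [← Int.cast_det]
  exact isUnit_iff_ne_zero.mpr (Int.cast_ne_zero.mpr hR)

lemma map_intCast_mul_Rinv {R : Matrix (Fin D) (Fin D) ℤ} (hR : R.det ≠ 0) :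
    R.map Int.cast * Rinv R = 1 :=
  mul_nonsing_inv _ (isUnit_det_map_intCast hR)

lemma Rinv_mul_map_intCast {R : Matrix (Fin D) (Fin D) ℤ} (hR : R.det ≠ 0) :
    Rinv R * R.map Int.cast = 1 :=
  nonsing_inv_mul _ (isUnit_det_map_intCast hR)

lemma Rinv_mul (U R : Matrix (Fin D) (Fin D) ℤ) :
    Rinv (U * R) = Rinv R * (U.map Int.cast)⁻¹ := by
  rw [Rinv, Rinv, map_intCast_mul, Matrix.mul_inv_rev]

lemma exists_map_intCast_eq_of_mulVec_cz {M : Matrix (Fin D) (Fin D) ℝ}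
    (hM : ∀ k : L D, ∃ l, M *ᵥ cz k = cz l) :
    ∃ U : Matrix (Fin D) (Fin D) ℤ, U.map Int.cast = M := by
  choose g hg using hM
  refine ⟨of fun i j => g (Pi.single j 1) i, ?_⟩
  ext i j
  have := congrFun (hg (Pi.single j 1)) i
  rw [cz_single, mulVec_single_one] at this
  simpa [cz] using this.symm

lemma exists_eq_mul_of_forall_exists {R R' : Matrix (Fin D) (Fin D) ℤ} {δ δ' : V D}
    (hR : R.det ≠ 0) (hR' : R'.det ≠ 0)
    (h : ∀ k, ∃ l, Rinv R' *ᵥ cz l + δ' = Rinv R *ᵥ cz k + δ) :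
    ∃ U, R' = U * R := by
  choose σ hσ using h
  have hσ0 : Rinv R' *ᵥ cz (σ 0) + δ' = δ := by
    simpa only [cz_zero, mulVec_zero, zero_add] using hσ 0
  have hlat : ∀ k, ∃ l, (R'.map Int.cast * Rinv R) *ᵥ cz k = cz l := by
    intro k
    have hdiff : Rinv R' *ᵥ cz (σ k - σ 0) = Rinv R *ᵥ cz k := by
      rw [cz_sub, mulVec_sub, ← add_sub_add_right_eq_sub _ _ δ', hσ k, hσ0, add_sub_cancel_right]
    refine ⟨σ k - σ 0, ?_⟩
    rw [← mulVec_mulVec, ← hdiff, mulVec_mulVec, map_intCast_mul_Rinv hR', one_mulVec]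
  obtain ⟨U, hU⟩ := exists_map_intCast_eq_of_mulVec_cz hlat
  refine ⟨U, map_injective (Int.cast_injective (α := ℝ)) ?_⟩
  dsimp only
  rw [map_intCast_mul, hU, Matrix.mul_assoc, Rinv_mul_map_intCast hR, Matrix.mul_one]

theorem exists_unimodular_of_forall_exists {R R' : Matrix (Fin D) (Fin D) ℤ} {δ δ' : V D}
    (hR : R.det ≠ 0) (hR' : R'.det ≠ 0)
    (h : ∀ k, ∃ l, Rinv R' *ᵥ cz l + δ' = Rinv R *ᵥ cz k + δ)
    (h' : ∀ l, ∃ k, Rinv R *ᵥ cz k + δ = Rinv R' *ᵥ cz l + δ') :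
    ∃ (U : Matrix (Fin D) (Fin D) ℤ) (n : L D),
      IsUnit U.det ∧ R' = U * R ∧ δ' = δ + Rinv R *ᵥ cz n := by
  obtain ⟨U, rfl⟩ := exists_eq_mul_of_forall_exists hR hR' h
  obtain ⟨W, hW⟩ := exists_eq_mul_of_forall_exists hR' hR h'
  obtain ⟨n, hn⟩ := h' 0
  refine ⟨U, n, ?_, rfl, ?_⟩
  · have : (W.det * U.det) * R.det = 1 * R.det := by
      rw [one_mul, ← det_mul, ← det_mul, Matrix.mul_assoc, ← hW]
    exact IsUnit.of_mul_eq_one_right _ (mul_right_cancel₀ hR this)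
  · rw [cz_zero, mulVec_zero, zero_add] at hn
    rw [← hn, add_comm]

end Lattice

section Intertwiner

variable {D : ℕ} {hb : ℝ} {q : ℂ} {F : Set (V D → ℂ)}
  {R R' : Matrix (Fin D) (Fin D) ℤ} {δ δ' : V D}

def Intertwines (D : ℕ) (hb : ℝ) (q : ℂ) (F : Set (V D → ℂ))
    (R : Matrix (Fin D) (Fin D) ℤ) (δ : V D) (R' : Matrix (Fin D) (Fin D) ℤ) (δ' : V D)
    (φ : DMod D ≃ₗ[ℂ] DMod D) : Prop :=
  ∀ a : Alg D, (∀ k, a k ∈ F) → ∀ v : DMod D,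
    φ (dact D hb q R δ a v) = dact D hb q R' δ' a (φ v)

lemma Intertwines.symm {φ : DMod D ≃ₗ[ℂ] DMod D} (hφ : Intertwines D hb q F R δ R' δ' φ) :
    Intertwines D hb q F R' δ' R δ φ.symm := by
  intro a ha u
  rw [φ.symm_apply_eq, hφ a ha, φ.apply_symm_apply]

lemma dact_single_zero_apply (f : V D → ℂ) (w : DMod D) (l : L D) :
    dact D hb q R δ (Finsupp.single 0 f) w l = f (hb • (Rinv R *ᵥ cz l + δ)) * w l := by
  unfold dact
  rw [Finsupp.sum_single_index (by simp), Finsupp.sum_apply]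
  unfold Finsupp.sum
  simp only [mulVec_zero, sub_zero, cz_zero, Finsupp.single_apply]
  rw [Finset.sum_ite_eq']
  by_cases h : l ∈ w.support
  · simp [h, Nr]
  · simp [h, Finsupp.notMem_support_iff.mp h]

lemma dact_single_zero_single (f : V D → ℂ) (k : L D) (c : ℂ) :
    dact D hb q R δ (Finsupp.single 0 f) (Finsupp.single k c)
      = Finsupp.single k (f (hb • (Rinv R *ᵥ cz k + δ)) * c) := by
  ext l
  rw [dact_single_zero_apply]
  by_cases h : k = l <;> simp [h]

lemma Intertwines.apply_eq {φ : DMod D ≃ₗ[ℂ] DMod D} (hφ : Intertwines D hb q F R δ R' δ' φ)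
    (hF0 : (0 : V D → ℂ) ∈ F) {k l : L D} (hl : φ (Finsupp.single k 1) l ≠ 0)
    {f : V D → ℂ} (hf : f ∈ F) :
    f (hb • (Rinv R' *ᵥ cz l + δ')) = f (hb • (Rinv R *ᵥ cz k + δ)) := by
  have ha : ∀ m, Finsupp.single (0 : L D) f m ∈ F := by
    intro m
    rw [Finsupp.single_apply]
    split_ifs <;> assumption
  have h := congrArg (· l) (hφ _ ha (Finsupp.single k 1))
  simp only [dact_single_zero_single, dact_single_zero_apply] at h
  rw [← smul_eq_mul, ← Finsupp.smul_single, map_smul, Finsupp.smul_apply, smul_eq_mul] at h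
  exact (mul_right_cancel₀ hl h).symm

lemma Intertwines.exists_eq {φ : DMod D ≃ₗ[ℂ] DMod D} (hφ : Intertwines D hb q F R δ R' δ' φ)
    (hhb : hb ≠ 0) (hF0 : (0 : V D → ℂ) ∈ F) (hsep : SeparatesPts D F) (k : L D) :
    ∃ l, Rinv R' *ᵥ cz l + δ' = Rinv R *ᵥ cz k + δ := by
  obtain ⟨l, hl⟩ := DFunLike.ne_iff.mp
    (φ.map_ne_zero_iff.mpr (Finsupp.single_ne_zero.mpr one_ne_zero))
  refine ⟨l, by_contra fun hne => ?_⟩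
  obtain ⟨f, hf, hfne⟩ := hsep _ _ fun h => hne (smul_right_injective (V D) hhb h)
  exact hfne (hφ.apply_eq hF0 hl hf)

lemma intertwines_domLCongr (e : L D ≃ L D) (he : ∀ k m, e (k - R *ᵥ m) = e k - R' *ᵥ m)
    (hpt : ∀ k, Rinv R' *ᵥ cz (e k) + δ' = Rinv R *ᵥ cz k + δ) :
    Intertwines D hb q F R δ R' δ' (Finsupp.domLCongr e) := by
  -- the phase and the argument of `f` in `dact` depend on `k` only through `R⁻¹k - n + δ`
  have hpt' : ∀ k m, Rinv R' *ᵥ cz (e k) - cz m + δ' = Rinv R *ᵥ cz k - cz m + δ := by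
    intro k m
    rw [sub_add_eq_add_sub, hpt, sub_add_eq_add_sub]
  intro a _ v
  have hv : (Finsupp.domLCongr e (R := ℂ) v : DMod D) = Finsupp.equivMapDomain e v :=
    Finsupp.domLCongr_apply e v
  unfold dact
  rw [map_finsuppSum, hv]
  refine Finsupp.sum_congr fun m _ => ?_
  rw [map_finsuppSum, Finsupp.sum_equivMapDomain]
  refine Finsupp.sum_congr fun k _ => ?_
  rw [Finsupp.domLCongr_single, he, hpt']

lemma intertwines_of_isUnit_det {U : Matrix (Fin D) (Fin D) ℤ} (hU : IsUnit U.det) (n : L D) :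
    Intertwines D hb q F R δ (U * R) (δ + Rinv R *ᵥ cz n) (Finsupp.domLCongr
      ((Equiv.subRight n).trans (toLinearEquiv' U (invertibleOfIsUnitDet U hU)).toEquiv)) := by
  have hUm : IsUnit (U.map (Int.cast : ℤ → ℝ)).det := by
    rw [← Int.cast_det]
    exact hU.map (Int.castRingHom ℝ)
  apply intertwines_domLCongr
  · intro k m
    change U *ᵥ (k - R *ᵥ m - n) = U *ᵥ (k - n) - (U * R) *ᵥ m
    rw [sub_right_comm, mulVec_sub, mulVec_mulVec]
  · intro k
    change Rinv (U * R) *ᵥ cz (U *ᵥ (k - n)) + (δ + Rinv R *ᵥ cz n) = _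
    rw [Rinv_mul, cz_mulVec, ← mulVec_mulVec, mulVec_mulVec (cz _),
      nonsing_inv_mul _ hUm, one_mulVec, cz_sub, mulVec_sub]
    abel

end Intertwiner

theorem stmt9_general (D : ℕ) (hb : ℝ) (hhb : 0 < hb) (q : ℂ)
    (F : Set (V D → ℂ)) (hF : GoodF D hb F) (hsep : SeparatesPts D F)
    (R R' : Matrix (Fin D) (Fin D) ℤ) (hR : R.det ≠ 0) (hR' : R'.det ≠ 0)
    (δ δ' : V D) :
    DIso D hb q F R δ R' δ' ↔
      ∃ (U : Matrix (Fin D) (Fin D) ℤ) (n : L D),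
        IsUnit U.det ∧ R' = U * R ∧ δ' = δ + (Rinv R).mulVec (cz n) := by
  constructor
  · rintro ⟨φ, hφ⟩
    exact exists_unimodular_of_forall_exists hR hR'
      (Intertwines.exists_eq hφ hhb.ne' hF.zero_mem hsep)
      (Intertwines.exists_eq (Intertwines.symm hφ) hhb.ne' hF.zero_mem hsep)
  · rintro ⟨U, n, hU, rfl, rfl⟩
    exact ⟨_, intertwines_of_isUnit_det hU n⟩

/-- Proposition 3.11: if `F` separates points, then `S_ħ(R,δ) ≅ S_ħ(R̃,δ̃)` if and only if
there exist `U ∈ GL_D(ℤ)` and `n ∈ ℤ^D` with `R̃ = UR` and `δ̃ = δ + R⁻¹n`. -/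
theorem stmt9 (D : ℕ) (hb : ℝ) (hhb : 0 < hb) (q : ℂ) (hq : ‖q‖ = 1)
    (F : Set (V D → ℂ)) (hF : GoodF D hb F) (hsep : SeparatesPts D F)
    (R R' : Matrix (Fin D) (Fin D) ℤ) (hR : R.det ≠ 0) (hR' : R'.det ≠ 0)
    (δ δ' : V D) :
    DIso D hb q F R δ R' δ' ↔
      ∃ (U : Matrix (Fin D) (Fin D) ℤ) (n : L D),
        IsUnit U.det ∧ R' = U * R ∧ δ' = δ + (Rinv R).mulVec (cz n) :=
  stmt9_general D hb hhb q F hF hsep R R' hR hR' δ δ'
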